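/- Let q ≥ 2 be an integer and let f : ℕ → ℂ be a q-multiplicative sequence with |f(n)| = 1 for all n, and suppose there exist constants c₀ > 0 and C₀ > 0 such that for all integers N ≥ 1 and all α ∈ ℝ, |∑_{n=0}^{N−1} f(n) e(nα)| ≤ C₀·N^{1−c₀}. Then for every r ≥ 0 the limit γ_r := lim_{N→∞} (1/N)·∑_{n=0}^{N−1} f(n+r)·conj(f(n)) exists, and there exist constants c > 0 and C > 0 such that for every integer R ≥ 1, (1/R)·∑_{r=0}^{R−1} |γ_r|² ≤ C·R^{−c}. -/

import Mathlib

open Finset Complex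

noncomputable section

/-- A sequence is `q`-multiplicative if `f (m + n) = f m * f n` whenever
`m < q ^ t` and `q ^ t ∣ n`. -/
def QMult (q : ℕ) (f : ℕ → ℂ) : Prop :=
  ∀ t m n : ℕ, m < q ^ t → q ^ t ∣ n → f (m + n) = f m * f n

/-- `e x = exp (2 π i x)`. -/
def e (x : ℝ) : ℂ := Complex.exp (2 * Real.pi * Complex.I * x)

/-- The weight `|ω|` of `ω ∈ {0,1}^s`: the number of coordinates equal to `1`. -/
def wt {s : ℕ} (ω : Fin s → Bool) : ℕ := (Finset.univ.filter fun i => ω i = true).card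

/-- The vertex `n₀ + ω₁ n₁ + ⋯ + ω_s n_s` of a parallelepiped. -/
def vertex (s : ℕ) (n : Fin (s + 1) → ℤ) (ω : Fin s → Bool) : ℤ :=
  n 0 + ∑ i : Fin s, if ω i then n i.succ else 0

/-- The set `Π_s(N)` of (s+1)-tuples all of whose associated vertices lie in `[0, N)`.
(Any such tuple automatically has all entries in `[-N, N]`.) -/
def PiSet (s N : ℕ) : Finset (Fin (s + 1) → ℤ) :=
  (Finset.Icc (fun _ => -(N : ℤ)) fun _ => (N : ℤ)).filter fun n =>
    ∀ ω : Fin s → Bool, 0 ≤ vertex s n ω ∧ vertex s n ω < N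

/-- The Gowers product `∏_ω conj^{|ω|} f(n₀ + ω·n)`. -/
def gowersTerm (s : ℕ) (f : ℕ → ℂ) (n : Fin (s + 1) → ℤ) : ℂ :=
  ∏ ω : Fin s → Bool, (starRingEnd ℂ)^[wt ω] (f (vertex s n ω).toNat)

/-- The Gowers average `‖f‖_{U^s[N]}^{2^s}` (as a complex number; it is in fact
real and nonnegative). -/
def gowersAvg (s N : ℕ) (f : ℕ → ℂ) : ℂ :=
  (∑ n ∈ PiSet s N, gowersTerm s f n) / (PiSet s N).card

/-- The Gowers uniformity norm `‖f‖_{U^s[N]}`. -/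
def gowersNorm (s N : ℕ) (f : ℕ → ℂ) : ℝ :=
  (gowersAvg s N f).re ^ ((1 : ℝ) / 2 ^ s)

/-- Sum of digits of `n` in base `q`. -/
def digitSum (q n : ℕ) : ℕ := (Nat.digits q n).sum

end

/-!
Since `f` is `q`-multiplicative of modulus one, the correlation sum over a block
`[a q^t, a q^t + N)` with `N ≤ q^t` agrees with the one over `[0, N)` except for at most `r`
boundary terms. Hence `corrSum f r (q^t) / q^t` is Cauchy at a geometric rate, its limit `γ_r`
satisfies `‖corrSum f r (q^t) - q^t γ_r‖ ≤ 4r`, and cutting a general `N` into blocks gives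
`corrSum f r N / N → γ_r`.

For `r < R` and `M = N + R`, `M · corrSum f r N` is the `r`-th discrete Fourier coefficient on
`ℤ/M` of `F_M · conj F_N`, where `F_K(α) = ∑_{m<K} f(m) e(mα)`. Parseval and the Gelfond bound
give `∑_{r<R} ‖corrSum f r N‖² ≤ C₀² M^{2-2c} N`. Taking `N = q^L ≈ R^{1+c/2}` and replacing
`corrSum f r N` by `N γ_r` at a cost of `4r` yields `∑_{r<R} ‖γ_r‖² ≪ R^{1-c}`.
-/

open Filter Topology

lemma e_add (x y : ℝ) : e (x + y) = e x * e y := by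
  rw [e, e, e, ← Complex.exp_add]; push_cast; ring_nf

lemma e_pow (x : ℝ) (k : ℕ) : e x ^ k = e (k * x) := by
  rw [e, e, ← Complex.exp_nat_mul]; push_cast; ring_nf

lemma e_intCast (j : ℤ) : e j = 1 := by
  rw [e, ← Complex.exp_int_mul_two_pi_mul_I j]; push_cast; ring_nf

lemma e_zero : e 0 = 1 := by exact_mod_cast e_intCast 0

lemma conj_e (x : ℝ) : (starRingEnd ℂ) (e x) = e (-x) := by
  rw [e, e, ← Complex.exp_conj]
  simp only [map_mul, map_ofNat, Complex.conj_ofReal, Complex.conj_I, Complex.ofReal_neg]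
  ring_nf

lemma e_eq_one_iff (x : ℝ) : e x = 1 ↔ ∃ n : ℤ, x = n := by
  rw [e, Complex.exp_eq_one_iff]
  constructor
  · rintro ⟨n, hn⟩
    refine ⟨n, ?_⟩
    have : ((x : ℂ) - n) * (2 * Real.pi * Complex.I) = 0 := by rw [sub_mul, ← hn]; ring
    exact_mod_cast sub_eq_zero.mp ((mul_eq_zero.mp this).resolve_right (by simp [Real.pi_ne_zero]))
  · rintro ⟨n, rfl⟩
    exact ⟨n, by push_cast; ring⟩

lemma sum_range_e_mul_div (M : ℕ) (hM : 0 < M) (j : ℤ) :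
    ∑ k ∈ range M, e (j * k / M) = if (M : ℤ) ∣ j then (M : ℂ) else 0 := by
  have hM0 : (M : ℝ) ≠ 0 := by positivity
  have hpow (k : ℕ) : e (j * k / M) = e (j / M) ^ k := by rw [e_pow]; ring_nf
  simp only [hpow]
  split_ifs with hd
  · obtain ⟨c, rfl⟩ := hd
    have : ((M * c : ℤ) : ℝ) / M = c := by push_cast; field_simp
    simp only [this, e_intCast, one_pow, sum_const, card_range, nsmul_eq_mul, mul_one]
  · have hne : e (j / M) ≠ 1 := by
      rw [Ne, e_eq_one_iff]
      rintro ⟨n, hn⟩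
      exact hd ⟨n, by rw [div_eq_iff hM0] at hn; exact_mod_cast hn.trans (mul_comm _ _)⟩
    have hroot : e (j / M) ^ M = 1 := by rw [e_pow, mul_div_cancel₀ _ hM0, e_intCast]
    rw [geom_sum_eq hne, hroot, sub_self, zero_div]

noncomputable def expSum (A : ℕ → ℂ) (K : ℕ) (α : ℝ) : ℂ := ∑ m ∈ range K, A m * e (m * α)

lemma sum_expSum_mul_conj_expSum (M K₁ K₂ s : ℕ) (hM : 0 < M) (hK₁ : K₁ ≤ M)
    (hs : K₂ + s ≤ K₁) (A B : ℕ → ℂ) :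
    ∑ k ∈ range M, expSum A K₁ (k / M) * (starRingEnd ℂ) (expSum B K₂ (k / M)) *
      e (-(s * (k / M))) = M * ∑ n ∈ range K₂, A (n + s) * (starRingEnd ℂ) (B n) := by
  have hdvd {m n : ℕ} (hm : m < K₁) (hn : n < K₂) :
      (M : ℤ) ∣ (m - n - s) ↔ m = n + s := by
    refine ⟨fun h => ?_, fun h => by simp [h]⟩
    have := Int.eq_zero_of_abs_lt_dvd h (abs_lt.mpr ⟨by omega, by omega⟩)
    omega
  calc _ = ∑ k ∈ range M, ∑ m ∈ range K₁, ∑ n ∈ range K₂,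
        A m * (starRingEnd ℂ) (B n) * e ((m - n - s : ℤ) * k / M) := by
        refine sum_congr rfl fun k _ => ?_
        rw [expSum, expSum, map_sum, sum_mul_sum, sum_mul]
        refine sum_congr rfl fun m _ => ?_
        rw [sum_mul]
        refine sum_congr rfl fun n _ => ?_
        rw [map_mul, conj_e]
        have : ((m - n - s : ℤ) : ℝ) * k / M = m * (k / M) + -(n * (k / M)) + -(s * (k / M)) := by
          push_cast; ring
        rw [this, e_add, e_add]; ring
    _ = ∑ m ∈ range K₁, ∑ n ∈ range K₂,
        A m * (starRingEnd ℂ) (B n) * ∑ k ∈ range M, e ((m - n - s : ℤ) * k / M) := by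
        rw [sum_comm]
        refine sum_congr rfl fun m _ => ?_
        rw [sum_comm]
        simp only [mul_sum]
    _ = ∑ n ∈ range K₂, ∑ m ∈ range K₁,
        if m = n + s then M * (A m * (starRingEnd ℂ) (B n)) else 0 := by
        rw [sum_comm]
        refine sum_congr rfl fun n hn => sum_congr rfl fun m hm => ?_
        simp only [sum_range_e_mul_div M hM, hdvd (mem_range.mp hm) (mem_range.mp hn)]
        split_ifs <;> ring
    _ = _ := by
        rw [mul_sum]
        refine sum_congr rfl fun n hn => ?_
        rw [sum_ite_eq' (range K₁), if_pos (mem_range.mpr (by have := mem_range.mp hn; omega))]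

lemma sum_sq_norm_expSum (M K : ℕ) (hM : 0 < M) (hK : K ≤ M) (A : ℕ → ℂ) :
    ∑ k ∈ range M, ‖expSum A K (k / M)‖ ^ 2 = M * ∑ n ∈ range K, ‖A n‖ ^ 2 := by
  have h := sum_expSum_mul_conj_expSum M K K 0 hM hK le_rfl A A
  simp only [Complex.mul_conj', CharP.cast_eq_zero, zero_mul, neg_zero, e_zero, mul_one,
    add_zero] at h
  exact_mod_cast h

noncomputable def corrSum (f : ℕ → ℂ) (r N : ℕ) : ℂ :=
  ∑ n ∈ range N, f (n + r) * (starRingEnd ℂ) (f n)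

lemma sum_sq_norm_corrSum_le {f : ℕ → ℂ} (hmod : ∀ n, ‖f n‖ = 1) (N R : ℕ) (X : ℝ)
    (hF : ∀ k : ℕ, ‖expSum f (N + R) (k / (N + R : ℕ))‖ ≤ X) :
    ∑ r ∈ range R, ‖corrSum f r N‖ ^ 2 ≤ X ^ 2 * N := by
  obtain rfl | hR := R.eq_zero_or_pos
  · simp only [range_zero, sum_empty]
    positivity
  set M := N + R
  have hM : 0 < M := by omega
  set d : ℕ → ℂ := fun k => expSum f M (k / M) * (starRingEnd ℂ) (expSum f N (k / M))
  have hcorr (r : ℕ) (hr : r < R) :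
      (M : ℂ) * corrSum f r N =
        (starRingEnd ℂ) (expSum (fun k => (starRingEnd ℂ) (d k)) M (r / M)) := by
    rw [corrSum, ← sum_expSum_mul_conj_expSum M M N r hM le_rfl (by omega) f f, expSum, map_sum]
    refine sum_congr rfl fun k _ => ?_
    have : (k : ℝ) * (r / M) = r * (k / M) := by ring
    rw [map_mul, Complex.conj_conj, conj_e, this]
  have hd (k : ℕ) : ‖d k‖ ^ 2 ≤ X ^ 2 * ‖expSum f N (k / M)‖ ^ 2 := by
    rw [norm_mul, Complex.norm_conj, mul_pow]
    gcongr
    exact hF k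
  have hM2 : (0 : ℝ) < (M : ℝ) ^ 2 := by positivity
  refine le_of_mul_le_mul_left ?_ hM2
  calc (M : ℝ) ^ 2 * ∑ r ∈ range R, ‖corrSum f r N‖ ^ 2
      = ∑ r ∈ range R, ‖expSum (fun k => (starRingEnd ℂ) (d k)) M (r / M)‖ ^ 2 := by
        rw [mul_sum]
        refine sum_congr rfl fun r hr => ?_
        rw [← Complex.norm_conj (expSum _ _ _), ← hcorr r (mem_range.mp hr), norm_mul,
          Complex.norm_natCast, mul_pow]
    _ ≤ ∑ r ∈ range M, ‖expSum (fun k => (starRingEnd ℂ) (d k)) M (r / M)‖ ^ 2 :=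
        sum_le_sum_of_subset_of_nonneg (range_subset_range.mpr (by omega))
          fun _ _ _ => by positivity
    _ = M * ∑ k ∈ range M, ‖d k‖ ^ 2 := by
        simp only [sum_sq_norm_expSum M M hM le_rfl, Complex.norm_conj]
    _ ≤ M * ∑ k ∈ range M, X ^ 2 * ‖expSum f N (k / M)‖ ^ 2 := by
        gcongr with k
        exact hd k
    _ = (M : ℝ) ^ 2 * (X ^ 2 * N) := by
        rw [← mul_sum, sum_sq_norm_expSum M N hM (by omega)]
        simp only [hmod, one_pow, sum_const, card_range, nsmul_eq_mul, mul_one]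
        ring

lemma corrSum_add (f : ℕ → ℂ) (r m n : ℕ) :
    corrSum f r (m + n) = corrSum f r m + corrSum (fun i => f (m + i)) r n := by
  simp only [corrSum, sum_range_add, add_assoc]

lemma norm_corrSum_le {f : ℕ → ℂ} (hmod : ∀ n, ‖f n‖ = 1) (r N : ℕ) : ‖corrSum f r N‖ ≤ N :=
  (norm_sum_le _ _).trans (by simp [hmod])

namespace QMult

variable {q : ℕ} {f : ℕ → ℂ}

lemma corrSum_shift_eq (hf : QMult q f) (hmod : ∀ n, ‖f n‖ = 1) (a t r N : ℕ)
    (hN : N + r ≤ q ^ t) : corrSum (fun i => f (a * q ^ t + i)) r N = corrSum f r N := by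
  refine sum_congr rfl fun n hn => ?_
  have hn : n < N := mem_range.mp hn
  have hshift (m : ℕ) (hm : m < q ^ t) : f (a * q ^ t + m) = f m * f (a * q ^ t) := by
    rw [add_comm, hf t m _ hm (dvd_mul_left _ _)]
  dsimp only
  rw [hshift (n + r) (by omega), hshift n (by omega), map_mul, mul_mul_mul_comm,
    Complex.mul_conj', hmod]
  simp

lemma norm_corrSum_shift_sub_le (hf : QMult q f) (hmod : ∀ n, ‖f n‖ = 1) (a t r N : ℕ)
    (hN : N ≤ q ^ t) :
    ‖corrSum (fun i => f (a * q ^ t + i)) r N - corrSum f r N‖ ≤ 2 * r := by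
  have hmod' : ∀ n, ‖f (a * q ^ t + n)‖ = 1 := fun n => hmod _
  by_cases hrN : r ≤ N
  · obtain ⟨k, rfl⟩ := Nat.exists_eq_add_of_le' hrN
    rw [corrSum_add, corrSum_add f, corrSum_shift_eq hf hmod a t r k (by omega),
      add_sub_add_left_eq_sub]
    calc _ ≤ ‖corrSum (fun i => f (a * q ^ t + (k + i))) r r‖ +
          ‖corrSum (fun i => f (k + i)) r r‖ := norm_sub_le _ _
      _ ≤ r + r := add_le_add (norm_corrSum_le (fun _ => hmod _) r r)
          (norm_corrSum_le (fun _ => hmod _) r r)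
      _ = 2 * r := by ring
  · calc _ ≤ ‖corrSum (fun i => f (a * q ^ t + i)) r N‖ + ‖corrSum f r N‖ := norm_sub_le _ _
      _ ≤ N + N := add_le_add (norm_corrSum_le hmod' r N) (norm_corrSum_le hmod r N)
      _ ≤ 2 * r := by
        have : (N : ℝ) ≤ r := by exact_mod_cast (not_le.mp hrN).le
        linarith

lemma norm_corrSum_mul_pow_sub_le (hf : QMult q f) (hmod : ∀ n, ‖f n‖ = 1) (a t r : ℕ) :
    ‖corrSum f r (a * q ^ t) - a * corrSum f r (q ^ t)‖ ≤ 2 * r * a := by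
  induction a with
  | zero => simp [corrSum]
  | succ a ih =>
    have hblock := norm_corrSum_shift_sub_le hf hmod a t r (q ^ t) le_rfl
    rw [add_mul, one_mul, corrSum_add]
    calc _ = ‖(corrSum f r (a * q ^ t) - a * corrSum f r (q ^ t)) +
          (corrSum (fun i => f (a * q ^ t + i)) r (q ^ t) - corrSum f r (q ^ t))‖ := by
          push_cast; ring_nf
      _ ≤ 2 * r * a + 2 * r := (norm_add_le _ _).trans (add_le_add ih hblock)
      _ = 2 * r * (a + 1 : ℕ) := by push_cast; ring

lemma exists_norm_corrSum_pow_sub_le (hq : 2 ≤ q) (hf : QMult q f) (hmod : ∀ n, ‖f n‖ = 1)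
    (r : ℕ) : ∃ γ : ℂ, ∀ t : ℕ, ‖corrSum f r (q ^ t) - q ^ t * γ‖ ≤ 4 * r := by
  have hq0 : (0 : ℝ) < q := by positivity
  have hqC : (q : ℂ) ≠ 0 := by exact_mod_cast (by omega : q ≠ 0)
  have hqinv : (q : ℝ)⁻¹ < 1 := inv_lt_one_of_one_lt₀ (by exact_mod_cast hq)
  set A : ℕ → ℂ := fun t => corrSum f r (q ^ t) / (q : ℂ) ^ t
  have hstep (t : ℕ) : dist (A t) (A (t + 1)) ≤ 2 * r * (q : ℝ)⁻¹ ^ t := by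
    have h := norm_corrSum_mul_pow_sub_le hf hmod q t r
    rw [← pow_succ'] at h
    have : A t - A (t + 1) =
        -(corrSum f r (q ^ (t + 1)) - q * corrSum f r (q ^ t)) / (q : ℂ) ^ (t + 1) := by
      simp only [A]
      field_simp
      ring
    rw [dist_eq_norm, this, norm_div, norm_neg, norm_pow, Complex.norm_natCast,
      div_le_iff₀ (by positivity)]
    refine h.trans (le_of_eq ?_)
    rw [inv_pow, pow_succ]
    field_simp
  obtain ⟨γ, hγ⟩ := cauchySeq_tendsto_of_complete (cauchySeq_of_le_geometric _ _ hqinv hstep)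
  refine ⟨γ, fun t => ?_⟩
  have htail := dist_le_of_le_geometric_of_tendsto _ _ hqinv hstep hγ t
  have hhalf : (1 : ℝ) / 2 ≤ 1 - (q : ℝ)⁻¹ := by
    have : (q : ℝ)⁻¹ ≤ 2⁻¹ := inv_anti₀ two_pos (by exact_mod_cast hq)
    linarith
  have : corrSum f r (q ^ t) - q ^ t * γ = (q : ℂ) ^ t * (A t - γ) := by
    simp only [A]
    field_simp
  rw [this, norm_mul, norm_pow, Complex.norm_natCast, ← dist_eq_norm]
  calc _ ≤ (q : ℝ) ^ t * (2 * r * (q : ℝ)⁻¹ ^ t / (1 / 2)) := by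
        gcongr
        exact htail.trans (div_le_div_of_nonneg_left (by positivity) (by norm_num) hhalf)
    _ = 4 * r := by
        rw [inv_pow]
        field_simp
        ring

lemma norm_corrSum_sub_le (hf : QMult q f) (hmod : ∀ n, ‖f n‖ = 1) {r : ℕ} {γ : ℂ}
    (hγ : ∀ t : ℕ, ‖corrSum f r (q ^ t) - q ^ t * γ‖ ≤ 4 * r) (a t b : ℕ) (hb : b ≤ q ^ t) :
    ‖corrSum f r (a * q ^ t + b) - (a * q ^ t + b : ℕ) * γ‖ ≤ 6 * r * a + (1 + ‖γ‖) * q ^ t := by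
  have hblock : ‖corrSum (fun i => f (a * q ^ t + i)) r b‖ ≤ b :=
    norm_corrSum_le (fun _ => hmod _) r b
  have hb' : (b : ℝ) ≤ q ^ t := by exact_mod_cast hb
  have hγa : ‖(a : ℂ) * (corrSum f r (q ^ t) - q ^ t * γ)‖ ≤ a * (4 * r) := by
    rw [norm_mul, Complex.norm_natCast]
    gcongr
    exact hγ t
  rw [corrSum_add]
  calc _ = ‖(corrSum f r (a * q ^ t) - a * corrSum f r (q ^ t)) +
        a * (corrSum f r (q ^ t) - q ^ t * γ) +
        corrSum (fun i => f (a * q ^ t + i)) r b - b * γ‖ := by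
        push_cast; ring_nf
    _ ≤ 2 * r * a + a * (4 * r) + b + b * ‖γ‖ := by
        refine (norm_sub_le _ _).trans (add_le_add (norm_add₃_le.trans ?_) ?_)
        · exact add_le_add_three (norm_corrSum_mul_pow_sub_le hf hmod a t r) hγa hblock
        · rw [norm_mul, Complex.norm_natCast]
    _ ≤ 6 * r * a + (1 + ‖γ‖) * q ^ t := by
        have : (b : ℝ) * ‖γ‖ ≤ q ^ t * ‖γ‖ := by gcongr
        linarith

/-- Splitting `N = a q ^ t + b` with `b < q ^ t` and letting first `t` and then `N` grow. -/
lemma tendsto_corrSum_div (hq : 2 ≤ q) (hf : QMult q f) (hmod : ∀ n, ‖f n‖ = 1) {r : ℕ}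
    {γ : ℂ} (hγ : ∀ t : ℕ, ‖corrSum f r (q ^ t) - q ^ t * γ‖ ≤ 4 * r) :
    Tendsto (fun N : ℕ => corrSum f r N / N) atTop (𝓝 γ) := by
  rw [Metric.tendsto_atTop]
  intro ε hε
  obtain ⟨t, ht⟩ := pow_unbounded_of_one_lt (12 * r / ε) (by exact_mod_cast hq : (1 : ℝ) < q)
  obtain ⟨N₀, hN₀⟩ := exists_nat_gt (2 * (1 + ‖γ‖) * q ^ t / ε)
  refine ⟨N₀, fun N hN => ?_⟩
  rw [div_lt_iff₀ hε] at ht hN₀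
  have hqt : 0 < q ^ t := by positivity
  have hN0 : (0 : ℝ) < N := by
    have : (0 : ℝ) < N₀ := by nlinarith [norm_nonneg γ, (by positivity : (0 : ℝ) < q ^ t)]
    exact this.trans_le (by exact_mod_cast hN)
  set a := N / q ^ t
  have hdecomp : a * q ^ t + N % q ^ t = N := Nat.div_add_mod' N (q ^ t)
  have haN : (a : ℝ) * q ^ t ≤ N := by exact_mod_cast hdecomp ▸ Nat.le_add_right _ _
  have hbound := norm_corrSum_sub_le hf hmod hγ a t (N % q ^ t) (Nat.mod_lt _ hqt).le
  rw [hdecomp] at hbound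
  rw [dist_eq_norm, div_sub' (by exact_mod_cast hN0.ne'), norm_div, Complex.norm_natCast,
    div_lt_iff₀ hN0]
  have hN₀N : (N₀ : ℝ) ≤ N := by exact_mod_cast hN
  have hmain : 12 * r * a ≤ ε * N := by
    nlinarith [mul_le_mul_of_nonneg_right ht.le (by positivity : (0 : ℝ) ≤ a)]
  nlinarith

end QMult

lemma sum_sq_norm_le_of_norm_corrSum_sub_le {f : ℕ → ℂ} (hmod : ∀ n, ‖f n‖ = 1) (N R : ℕ)
    (hN : 0 < N) (X E : ℝ) (hF : ∀ k : ℕ, ‖expSum f (N + R) (k / (N + R : ℕ))‖ ≤ X)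
    (γ : ℕ → ℂ) (hγ : ∀ r < R, ‖corrSum f r N - N * γ r‖ ≤ E) :
    ∑ r ∈ range R, ‖γ r‖ ^ 2 ≤ 2 * (X ^ 2 * N + R * E ^ 2) / (N : ℝ) ^ 2 := by
  have hterm (r : ℕ) (hr : r < R) :
      (N : ℝ) ^ 2 * ‖γ r‖ ^ 2 ≤ 2 * (‖corrSum f r N‖ ^ 2 + E ^ 2) := by
    have h : N * ‖γ r‖ ≤ ‖corrSum f r N‖ + E := by
      have := norm_sub_norm_le (N * γ r) (corrSum f r N)
      rw [norm_sub_rev, norm_mul, Complex.norm_natCast] at this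
      linarith [hγ r hr]
    calc (N : ℝ) ^ 2 * ‖γ r‖ ^ 2 = (N * ‖γ r‖) ^ 2 := by ring
      _ ≤ (‖corrSum f r N‖ + E) ^ 2 := pow_le_pow_left₀ (by positivity) h 2
      _ ≤ 2 * (‖corrSum f r N‖ ^ 2 + E ^ 2) := by nlinarith [sq_nonneg (‖corrSum f r N‖ - E)]
  rw [le_div_iff₀ (by positivity), mul_comm, mul_sum]
  calc ∑ r ∈ range R, (N : ℝ) ^ 2 * ‖γ r‖ ^ 2
      ≤ ∑ r ∈ range R, 2 * (‖corrSum f r N‖ ^ 2 + E ^ 2) :=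
        sum_le_sum fun r hr => hterm r (mem_range.mp hr)
    _ = 2 * (∑ r ∈ range R, ‖corrSum f r N‖ ^ 2 + R * E ^ 2) := by
        rw [← mul_sum, sum_add_distrib, sum_const, card_range, nsmul_eq_mul]
    _ ≤ 2 * (X ^ 2 * N + R * E ^ 2) := by
        gcongr
        exact sum_sq_norm_corrSum_le hmod N R X hF

section Exponents

variable {q c C₀ N R : ℝ}

lemma sq_mul_rpow_add_div_le (hq : 1 ≤ q) (hc : 0 < c) (hc' : c ≤ 1 / 2) (hR : 1 ≤ R)
    (hRN : R ^ (1 + c / 2) ≤ N) (hNR : N ≤ q * R ^ (1 + c / 2)) :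
    (C₀ * (N + R) ^ (1 - c)) ^ 2 / N ≤ 4 * C₀ ^ 2 * q * R ^ (1 - c) := by
  have hR0 : 0 < R := by linarith
  have hRRa : R ≤ R ^ (1 + c / 2) := by
    simpa using Real.rpow_le_rpow_of_exponent_le hR (by linarith : (1 : ℝ) ≤ 1 + c / 2)
  have hN0 : 0 < N := by linarith
  have hsum : (N + R) ^ (1 - c) ≤ 2 * N ^ (1 - c) := by
    calc (N + R) ^ (1 - c) ≤ (2 * N) ^ (1 - c) := by gcongr <;> linarith
      _ = 2 ^ (1 - c) * N ^ (1 - c) := Real.mul_rpow (by norm_num) hN0.le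
      _ ≤ 2 * N ^ (1 - c) := by
          gcongr
          simpa using Real.rpow_le_rpow_of_exponent_le (by norm_num : (1 : ℝ) ≤ 2)
            (by linarith : 1 - c ≤ 1)
  have hsq : (N ^ (1 - c)) ^ 2 = N ^ (1 - 2 * c) * N := by
    rw [← Real.rpow_mul_natCast hN0.le, ← Real.rpow_add_one hN0.ne']
    norm_num
    ring_nf
  have hNpow : N ^ (1 - 2 * c) ≤ q * R ^ (1 - c) := by
    calc N ^ (1 - 2 * c) ≤ (q * R ^ (1 + c / 2)) ^ (1 - 2 * c) := by gcongr; linarith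
      _ = q ^ (1 - 2 * c) * R ^ ((1 + c / 2) * (1 - 2 * c)) := by
          rw [Real.mul_rpow (by linarith) (by positivity), Real.rpow_mul hR0.le]
      _ ≤ q ^ (1 : ℝ) * R ^ (1 - c) := by
          gcongr
          · linarith
          · nlinarith
      _ = q * R ^ (1 - c) := by rw [Real.rpow_one]
  calc (C₀ * (N + R) ^ (1 - c)) ^ 2 / N ≤ C₀ ^ 2 * (2 * N ^ (1 - c)) ^ 2 / N := by
        rw [mul_pow]
        gcongr
    _ = 4 * C₀ ^ 2 * N ^ (1 - 2 * c) := by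
        rw [mul_pow, hsq]
        field_simp
        ring
    _ ≤ 4 * C₀ ^ 2 * q * R ^ (1 - c) := by
        rw [mul_assoc _ q]
        gcongr

lemma pow_three_div_sq_le_rpow (hR : 1 ≤ R) (hRN : R ^ (1 + c / 2) ≤ N) :
    R ^ 3 / N ^ 2 ≤ R ^ (1 - c) := by
  have hR0 : 0 < R := by linarith
  have hpow : R ^ (2 + c) ≤ N ^ 2 := by
    calc R ^ (2 + c) = (R ^ (1 + c / 2)) ^ 2 := by
          rw [← Real.rpow_mul_natCast hR0.le]; ring_nf
      _ ≤ N ^ 2 := by gcongr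
  have hcube : R ^ 3 = R ^ (1 - c) * R ^ (2 + c) := by
    rw [← Real.rpow_add hR0]; norm_num
  rw [div_le_iff₀ ((Real.rpow_pos_of_pos hR0 _).trans_le hpow), hcube]
  gcongr

end Exponents

lemma sum_sq_norm_le_rpow {q : ℕ} {f : ℕ → ℂ} (hq : 2 ≤ q) (hmod : ∀ n, ‖f n‖ = 1) {c C₀ : ℝ}
    (hc : 0 < c) (hc' : c ≤ 1 / 2)
    (hexp : ∀ N : ℕ, 1 ≤ N → ∀ α : ℝ, ‖expSum f N α‖ ≤ C₀ * (N : ℝ) ^ (1 - c))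
    (γ : ℕ → ℂ) (hγ : ∀ r t : ℕ, ‖corrSum f r (q ^ t) - q ^ t * γ r‖ ≤ 4 * r)
    (R : ℕ) (hR : 1 ≤ R) :
    ∑ r ∈ range R, ‖γ r‖ ^ 2 ≤ (8 * C₀ ^ 2 * q + 32) * (R : ℝ) ^ (1 - c) := by
  have hR1 : (1 : ℝ) ≤ R := by exact_mod_cast hR
  have hq1 : (1 : ℝ) ≤ q := by exact_mod_cast (by omega : 1 ≤ q)
  -- `N ≈ R ^ (1 + c / 2)` balances the Parseval term `N ^ (1 - 2c)` against the truncation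
  -- error `R ^ 3 / N ^ 2`.
  obtain ⟨n, hn, hn'⟩ := exists_nat_pow_near
    (Real.one_le_rpow hR1 (by positivity : (0 : ℝ) ≤ 1 + c / 2))
    (by exact_mod_cast hq : (1 : ℝ) < q)
  set N := q ^ (n + 1)
  have hN : 0 < N := by positivity
  have hRN : (R : ℝ) ^ (1 + c / 2) ≤ N := by push_cast [N]; exact hn'.le
  have hNR : (N : ℝ) ≤ q * R ^ (1 + c / 2) := by push_cast [N]; rw [pow_succ']; gcongr
  have hcorr (r : ℕ) (hr : r < R) : ‖corrSum f r N - N * γ r‖ ≤ 4 * R := by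
    have h := hγ r (n + 1)
    push_cast [N]
    exact h.trans (by gcongr)
  refine (sum_sq_norm_le_of_norm_corrSum_sub_le hmod N R hN _ _
    (fun k => hexp (N + R) (by omega) _) γ hcorr).trans ?_
  have hsplit : 2 * ((C₀ * ((N + R : ℕ) : ℝ) ^ (1 - c)) ^ 2 * N + R * (4 * R) ^ 2) / (N : ℝ) ^ 2
      = 2 * ((C₀ * ((N : ℝ) + R) ^ (1 - c)) ^ 2 / N) + 32 * ((R : ℝ) ^ 3 / (N : ℝ) ^ 2) := by
    push_cast
    field_simp
    ring
  rw [hsplit]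
  have hmain := sq_mul_rpow_add_div_le (C₀ := C₀) hq1 hc hc' hR1 hRN hNR
  have herr := pow_three_div_sq_le_rpow hR1 hRN
  linarith

/-- For a `q`-multiplicative sequence of Gelfond type of order 1,
the autocorrelations `γ_r` exist and converge to zero in density with a power
saving: `E_{r<R} |γ_r|² ≪ R^{-c}`. -/
theorem stmt19 (q : ℕ) (hq : 2 ≤ q) (f : ℕ → ℂ) (hf : QMult q f)
    (hmod : ∀ n, ‖f n‖ = 1)
    (hGelfond : ∃ c₀ > (0 : ℝ), ∃ C₀ > (0 : ℝ), ∀ N : ℕ, 1 ≤ N → ∀ α : ℝ,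
      ‖∑ n ∈ Finset.range N, f n * e (n * α)‖ ≤ C₀ * (N : ℝ) ^ ((1 : ℝ) - c₀)) :
    ∃ γ : ℕ → ℂ,
      (∀ r : ℕ, Filter.Tendsto
        (fun N : ℕ => (∑ n ∈ Finset.range N, f (n + r) * (starRingEnd ℂ) (f n)) / N)
        Filter.atTop (nhds (γ r))) ∧
      ∃ c > (0 : ℝ), ∃ C > (0 : ℝ), ∀ R : ℕ, 1 ≤ R →
        (∑ r ∈ Finset.range R, ‖γ r‖ ^ 2) / R ≤ C * (R : ℝ) ^ (-c) := by
  obtain ⟨c₀, hc₀, C₀, hC₀, hGel⟩ := hGelfond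
  set c := min c₀ (1 / 2)
  have hc : 0 < c := lt_min hc₀ (by norm_num)
  have hexp (N : ℕ) (hN : 1 ≤ N) (α : ℝ) : ‖expSum f N α‖ ≤ C₀ * (N : ℝ) ^ (1 - c) :=
    (hGel N hN α).trans (by gcongr; exacts [by exact_mod_cast hN, min_le_left _ _])
  choose γ hγ using fun r => hf.exists_norm_corrSum_pow_sub_le hq hmod r
  refine ⟨γ, fun r => hf.tendsto_corrSum_div hq hmod (hγ r), c, hc, 8 * C₀ ^ 2 * q + 32,
    by positivity, fun R hR => ?_⟩
  have hR0 : (0 : ℝ) < R := by exact_mod_cast hR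
  rw [div_le_iff₀ hR0, mul_assoc, ← Real.rpow_add_one hR0.ne', neg_add_eq_sub]
  exact sum_sq_norm_le_rpow hq hmod hc (min_le_right _ _) hexp γ hγ R hR
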